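/- arXiv:2304.00888 — 12 statements merged into one kernel-verified Lean document; each statement's English description precedes it below -/
import Mathlib

section
/- If S = {s_1 < ... < s_n} is a convex set with n ≥ 3, then |D_2(S)| ≥ n, where D_2(S) = {s_x - s_y : 1 ≤ x - y ≤ 2}. -/
/-- `Dle k n s` is the set `{s x - s y : 1 ≤ x - y ≤ k, 1 ≤ y, x ≤ n}`. -/
noncomputable def Dle (k n : ℕ) (s : ℕ → ℝ) : Finset ℝ :=
  ((Finset.Icc 1 n ×ˢ Finset.Icc 1 n).filter
    (fun p => 1 ≤ p.1 - p.2 ∧ p.1 - p.2 ≤ k)).image (fun p => s p.1 - s p.2)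

/-- If S is a convex set with n ≥ 3, then |D_2(S)| ≥ n. -/
theorem card_D2_of_convex (n : ℕ) (hn : 3 ≤ n) (s : ℕ → ℝ)
    (hmono : ∀ i, 1 ≤ i → i + 1 ≤ n → s i < s (i + 1))
    (hconv : ∀ i, 1 ≤ i → i + 2 ≤ n → s (i + 1) - s i < s (i + 2) - s (i + 1)) :
    n ≤ (Dle 2 n s).card := by
  set t : ℕ → ℝ := fun i => if i < n then s (i + 1) - s i else s n - s (n - 2) with ht
  have hstep : ∀ i, 1 ≤ i → i + 1 ≤ n → t i < t (i + 1) := by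
    intro i h1 h2
    have hi : i < n := by omega
    rcases lt_or_eq_of_le h2 with h | h
    · have : t i = s (i+1) - s i := by simp [ht, hi]
      have h2' : t (i+1) = s (i+2) - s (i+1) := by simp [ht, h]
      rw [this, h2']
      exact hconv i h1 (by omega)
    · -- i + 1 = n
      have hi' : i = n - 1 := by omega
      have : t i = s n - s (n-1) := by
        simp only [ht, if_pos hi]
        rw [hi']
        have e1 : n - 1 + 1 = n := by omega
        rw [e1]
      have h2' : t (i+1) = s n - s (n-2) := by
        simp [ht, h]
      rw [this, h2']
      have := hmono (n-2) (by omega) (by omega)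
      have e : n - 2 + 1 = n - 1 := by omega
      rw [e] at this
      linarith
  have hmonot : ∀ i j, 1 ≤ i → j ≤ n → i < j → t i < t j := by
    intro i j h1 h2 hij
    induction j with
    | zero => omega
    | succ k ih =>
      rcases lt_or_eq_of_le (Nat.lt_succ_iff.mp hij) with h | h
      · exact lt_trans (ih (by omega) h) (hstep k (by omega) h2)
      · subst h; exact hstep i h1 h2
  have hmem : ∀ i, 1 ≤ i → i ≤ n → t i ∈ Dle 2 n s := by
    intro i h1 h2
    unfold Dle
    rcases lt_or_eq_of_le h2 with h | h
    · apply Finset.mem_image.mpr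
      refine ⟨(i+1, i), ?_, by simp [ht, h]⟩
      simp [Finset.mem_filter, Finset.mem_Icc]
      omega
    · apply Finset.mem_image.mpr
      refine ⟨(n, n-2), ?_, ?_⟩
      · simp [Finset.mem_filter, Finset.mem_Icc]; omega
      · simp [ht, h]
  have hsub : (Finset.Icc 1 n).image t ⊆ Dle 2 n s := by
    intro x hx
    obtain ⟨i, hi, rfl⟩ := Finset.mem_image.mp hx
    rw [Finset.mem_Icc] at hi
    exact hmem i hi.1 hi.2
  have hcard : ((Finset.Icc 1 n).image t).card = n := by
    rw [Finset.card_image_of_injOn, Nat.card_Icc]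
    · omega
    · intro a ha b hb hab
      simp only [Finset.coe_Icc, Set.mem_Icc] at ha hb
      by_contra hne
      rcases Nat.lt_or_ge a b with h | h
      · exact absurd hab (ne_of_lt (hmonot a b ha.1 hb.2 h))
      · have : b < a := by omega
        exact absurd hab.symm (ne_of_lt (hmonot b a hb.1 ha.2 this))
  calc n = ((Finset.Icc 1 n).image t).card := hcard.symm
    _ ≤ (Dle 2 n s).card := Finset.card_le_card hsub
end

section
/- Let f_i denote the i-th Fibonacci number and let S = {f_{i+3} : i ∈ [n]} for n ≥ 3. Then S is a convex set and |D_2(S)| = n. -/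
lemma fib_diff1 (y : ℕ) : (Nat.fib (y + 4) : ℝ) - Nat.fib (y + 3) = Nat.fib (y + 2) := by
  have : Nat.fib (y + 4) = Nat.fib (y + 3) + Nat.fib (y + 2) := by
    rw [show y + 4 = (y + 2) + 2 by ring, Nat.fib_add_two]; ring
  rw [this]; push_cast; ring

lemma fib_diff2 (y : ℕ) : (Nat.fib (y + 5) : ℝ) - Nat.fib (y + 3) = Nat.fib (y + 4) := by
  have : Nat.fib (y + 5) = Nat.fib (y + 4) + Nat.fib (y + 3) := by
    rw [show y + 5 = (y + 3) + 2 by ring, Nat.fib_add_two]; ring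
  rw [this]; push_cast; ring

/-- The set S = {f_{i+3} : i ∈ [n]} of shifted Fibonacci numbers (n ≥ 3) is
convex and satisfies |D_2(S)| = n. -/
theorem fib_convex_card_D2 (n : ℕ) (hn : 3 ≤ n) (s : ℕ → ℝ)
    (hs : ∀ i, s i = (Nat.fib (i + 3) : ℝ)) :
    (∀ i, 1 ≤ i → i + 2 ≤ n → s (i + 1) - s i < s (i + 2) - s (i + 1)) ∧
      (Dle 2 n s).card = n := by
  constructor
  · intro i _ _
    rw [hs, hs, hs]
    have h1 : (Nat.fib (i + 1 + 3) : ℝ) - Nat.fib (i + 3) = Nat.fib (i + 2) := fib_diff1 i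
    have h2 : (Nat.fib (i + 2 + 3) : ℝ) - Nat.fib (i + 1 + 3) = Nat.fib (i + 3) := fib_diff1 (i + 1)
    rw [h1, h2]
    exact_mod_cast Nat.fib_lt_fib_succ (n := i + 2) (by omega)
  · have key : Dle 2 n s = (Finset.Icc 3 (n + 2)).image (fun k => (Nat.fib k : ℝ)) := by
      ext a
      simp only [Dle, Finset.mem_image, Finset.mem_filter, Finset.mem_product,
        Finset.mem_Icc, Prod.exists]
      constructor
      · rintro ⟨x, y, ⟨⟨⟨hy1, _⟩, ⟨_, hxn⟩⟩, hd1, hd2⟩, rfl⟩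
        have hcase : x = y + 1 ∨ x = y + 2 := by omega
        rcases hcase with rfl | rfl
        · refine ⟨y + 2, by omega, ?_⟩
          rw [hs, hs, show y + 1 + 3 = y + 4 by ring, fib_diff1]
        · refine ⟨y + 4, by omega, ?_⟩
          rw [hs, hs, show y + 2 + 3 = y + 5 by ring, fib_diff2]
      · rintro ⟨k, ⟨hk1, hk2⟩, rfl⟩
        by_cases h : k ≤ n + 1
        · refine ⟨k - 1, k - 2, ⟨⟨⟨by omega, by omega⟩, ⟨by omega, by omega⟩⟩, by omega, by omega⟩, ?_⟩
          rw [hs, hs, show k - 1 + 3 = (k - 2) + 4 by omega, show k - 2 + 3 = (k - 2) + 4 - 1 by omega]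
          rw [show (k-2) + 4 - 1 = (k-2) + 3 by omega, fib_diff1, show k - 2 + 2 = k by omega]
        · have hk : k = n + 2 := by omega
          refine ⟨n, n - 2, ⟨⟨⟨by omega, le_refl n⟩, ⟨by omega, by omega⟩⟩, by omega, by omega⟩, ?_⟩
          rw [hs, hs, show n + 3 = (n - 2) + 5 by omega, fib_diff2]
          congr 2; omega
    rw [key, Finset.card_image_of_injOn, Nat.card_Icc]
    · omega
    · intro a ha b hb hab
      simp only [Finset.coe_Icc, Set.mem_Icc] at ha hb
      have : Nat.fib a = Nat.fib b := by simp only [] at hab; exact_mod_cast hab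
      exact Nat.fib_strictMonoOn.injOn (Set.mem_Ici.mpr (by omega)) (Set.mem_Ici.mpr (by omega)) this
end

section
/- If S = {s_1 < ... < s_n} is a convex set with n ≥ 4, then |D_3(S)| ≥ n + 1, where D_3(S) = {s_x - s_y : 1 ≤ x - y ≤ 3}. -/
/-- If S is a convex set with n ≥ 4, then |D_3(S)| ≥ n + 1. -/
theorem card_D3_ge_of_convex (n : ℕ) (hn : 4 ≤ n) (s : ℕ → ℝ)
    (hmono : ∀ i, 1 ≤ i → i + 1 ≤ n → s i < s (i + 1))
    (hconv : ∀ i, 1 ≤ i → i + 2 ≤ n → s (i + 1) - s i < s (i + 2) - s (i + 1)) :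
    n + 1 ≤ (Dle 3 n s).card := by
  classical
  set f : ℕ → ℝ := fun i =>
    if i ≤ n - 1 then s (i + 1) - s i
    else if i = n then s n - s (n - 2)
    else s n - s (n - 3) with hf
  have hadj : ∀ i, 1 ≤ i → i + 1 ≤ n + 1 → f i < f (i + 1) := by
    intro i h1 h2
    by_cases hA : i + 1 ≤ n - 1
    · simp only [hf]
      rw [if_pos (by omega : i ≤ n - 1), if_pos hA]
      exact hconv i h1 (by omega)
    · by_cases hB : i + 1 = n
      · simp only [hf]
        rw [if_pos (by omega : i ≤ n - 1), if_neg (by omega), if_pos hB]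
        have h := hmono (n - 2) (by omega) (by omega)
        rw [show n - 2 + 1 = i from by omega] at h
        rw [hB]
        linarith
      · have hi : i = n := by omega
        have e1 : f i = s n - s (n - 2) := by
          simp only [hf, hi]
          split_ifs <;> first | rfl | omega
        have e2 : f (i + 1) = s n - s (n - 3) := by
          simp only [hf, hi]
          split_ifs <;> first | rfl | omega
        rw [e1, e2]
        have h := hmono (n - 3) (by omega) (by omega)
        rw [show n - 3 + 1 = n - 2 from by omega] at h
        linarith
  have hlt : ∀ i j, 1 ≤ i → i < j → j ≤ n + 1 → f i < f j := by
    intro i j h1 hij hj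
    induction j with
    | zero => omega
    | succ k ih =>
      rcases Nat.lt_or_ge i k with h | h
      · exact lt_trans (ih h (by omega)) (hadj k (by omega) (by omega))
      · have hik : i = k := by omega
        subst hik
        exact hadj i h1 hj
  have hmem : ∀ i ∈ Finset.Icc 1 (n + 1), f i ∈ Dle 3 n s := by
    intro i hi
    rw [Finset.mem_Icc] at hi
    unfold Dle
    simp only [Finset.mem_image, Finset.mem_filter, Finset.mem_product, Finset.mem_Icc]
    by_cases hA : i ≤ n - 1
    · refine ⟨(i + 1, i), ⟨⟨⟨by omega, by omega⟩, by omega, by omega⟩, by omega, by omega⟩, ?_⟩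
      simp only [hf]
      rw [if_pos hA]
    · by_cases hB : i = n
      · refine ⟨(n, n - 2), ⟨⟨⟨by omega, by omega⟩, by omega, by omega⟩, by omega, by omega⟩, ?_⟩
        simp only [hf]
        rw [if_neg (by omega), if_pos hB]
      · refine ⟨(n, n - 3), ⟨⟨⟨by omega, by omega⟩, by omega, by omega⟩, by omega, by omega⟩, ?_⟩
        simp only [hf]
        rw [if_neg (by omega), if_neg hB]
  have hinj : Set.InjOn f (Finset.Icc 1 (n + 1)) := by
    intro a ha b hb hab
    rw [Finset.coe_Icc, Set.mem_Icc] at ha hb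
    by_contra hne
    rcases Nat.lt_or_ge a b with h | h
    · exact absurd hab (ne_of_lt (hlt a b ha.1 h hb.2))
    · have h' : b < a := by omega
      exact absurd hab.symm (ne_of_lt (hlt b a hb.1 h' ha.2))
  calc n + 1 = (Finset.Icc 1 (n + 1)).card := by simp
    _ ≤ (Dle 3 n s).card := Finset.card_le_card_of_injOn f hmem hinj
end

section
/- If S = {s_1 < ... < s_n} is a convex set with n ≥ 5, then |D_3(S)| ≥ n + 2, where D_3(S) = {s_x - s_y : 1 ≤ x - y ≤ 3}. -/
/-- If S is a convex set with n ≥ 5, then |D_3(S)| ≥ n + 2. -/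
theorem card_D3_ge_of_convex' (n : ℕ) (hn : 5 ≤ n) (s : ℕ → ℝ)
    (hmono : ∀ i, 1 ≤ i → i + 1 ≤ n → s i < s (i + 1))
    (hconv : ∀ i, 1 ≤ i → i + 2 ≤ n → s (i + 1) - s i < s (i + 2) - s (i + 1)) :
    n + 2 ≤ (Dle 3 n s).card := by
  obtain ⟨m, rfl⟩ : ∃ m, n = m + 5 := ⟨n - 5, by omega⟩
  -- strict monotonicity of the consecutive differences
  have hd : ∀ i j : ℕ, 1 ≤ i → i < j → j + 1 ≤ m + 5 →
      s (i + 1) - s i < s (j + 1) - s j := by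
    intro i j hi hij hj
    induction j with
    | zero => omega
    | succ k ih =>
      rcases Nat.lt_or_ge i k with h | h
      · have h1 := ih h (by omega)
        have h2 := hconv k (by omega) (by omega)
        linarith
      · have : i = k := by omega
        subst this
        exact hconv i hi (by omega)
  have hmem : ∀ x y : ℕ, 1 ≤ y → x ≤ m + 5 → 1 ≤ x - y → x - y ≤ 3 →
      s x - s y ∈ Dle 3 (m + 5) s := by
    intro x y h1 h2 h3 h4
    simp only [Dle, Finset.mem_image, Finset.mem_filter, Finset.mem_product, Finset.mem_Icc]
    exact ⟨(x, y), ⟨⟨⟨by omega, h2⟩, ⟨h1, by omega⟩⟩, h3, h4⟩, rfl⟩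
  set D : Finset ℝ := (Finset.Icc 1 (m + 4)).image (fun i => s (i + 1) - s i) with hD
  have hDcard : D.card = m + 4 := by
    rw [hD, Finset.card_image_of_injOn, Nat.card_Icc]
    · omega
    · intro i hi j hj hij
      simp only [Finset.coe_Icc, Set.mem_Icc] at hi hj
      simp only at hij
      by_contra hne
      rcases Nat.lt_or_ge i j with h | h
      · have := hd i j hi.1 h (by omega); linarith
      · have := hd j i hj.1 (by omega) (by omega); linarith
  have hdle : ∀ j, 1 ≤ j → j ≤ m + 4 → s (j + 1) - s j ≤ s (m + 5) - s (m + 4) := by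
    intro j h1 h2
    rcases eq_or_lt_of_le h2 with h | h
    · subst h; exact le_refl _
    · exact le_of_lt (hd j (m + 4) h1 h (by omega))
  have hdle3 : ∀ j, 1 ≤ j → j ≤ m + 3 → s (j + 1) - s j ≤ s (m + 4) - s (m + 3) := by
    intro j h1 h2
    rcases eq_or_lt_of_le h2 with h | h
    · subst h; exact le_refl _
    · exact le_of_lt (hd j (m + 3) h1 h (by omega))
  -- key differences
  have d1 := hmono (m + 1) (by omega) (by omega)  -- s(m+1) < s(m+2)
  have d2 := hmono (m + 2) (by omega) (by omega)
  have d3 := hmono (m + 3) (by omega) (by omega)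
  have d4 := hmono (m + 4) (by omega) (by omega)
  have h24 := hd (m + 2) (m + 4) (by omega) (by omega) (by omega)
  have h13 := hd (m + 1) (m + 3) (by omega) (by omega) (by omega)
  obtain ⟨y, hy⟩ : ∃ y : ℝ, y = s (m + 5) - s (m + 3) := ⟨_, rfl⟩
  obtain ⟨z, hz⟩ : ∃ z : ℝ, z = s (m + 5) - s (m + 2) := ⟨_, rfl⟩
  have hymem : y ∈ Dle 3 (m + 5) s := hy ▸ hmem (m + 5) (m + 3) (by omega) (by omega) (by omega) (by omega)
  have hzmem : z ∈ Dle 3 (m + 5) s := hz ▸ hmem (m + 5) (m + 2) (by omega) (by omega) (by omega) (by omega)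
  have hyz : y < z := by rw [hy, hz]; linarith
  have hygt : ∀ w ∈ D, w < y := by
    intro w hw
    rw [hD] at hw
    obtain ⟨j, hj, rfl⟩ := Finset.mem_image.mp hw
    simp only [Finset.mem_Icc] at hj
    have := hdle j hj.1 hj.2
    rw [hy]; linarith
  have hzgt : ∀ w ∈ D, w < z := fun w hw => lt_trans (hygt w hw) hyz
  -- choose the third element x depending on a case split
  obtain ⟨x, hxmem, hxnotD, hxy⟩ :
      ∃ x : ℝ, x ∈ Dle 3 (m + 5) s ∧ x ∉ D ∧ x < y := by
    by_cases hcase : s (m + 4) - s (m + 2) = s (m + 5) - s (m + 4)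
    · -- degenerate case: use s(m+4) - s(m+1)
      refine ⟨s (m + 4) - s (m + 1),
        hmem (m + 4) (m + 1) (by omega) (by omega) (by omega) (by omega), ?_, ?_⟩
      · intro hmemD
        obtain ⟨j, hj, heq⟩ := Finset.mem_image.mp hmemD
        simp only [Finset.mem_Icc] at hj
        have := hdle j hj.1 hj.2
        linarith
      · rw [hy]; linarith
    · -- generic case: use s(m+4) - s(m+2)
      refine ⟨s (m + 4) - s (m + 2),
        hmem (m + 4) (m + 2) (by omega) (by omega) (by omega) (by omega), ?_, ?_⟩
      · intro hmemD
        obtain ⟨j, hj, heq⟩ := Finset.mem_image.mp hmemD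
        simp only [Finset.mem_Icc] at hj
        rcases eq_or_lt_of_le hj.2 with h | h
        · subst h; exact hcase heq.symm
        · have := hdle3 j hj.1 (by omega)
          linarith
      · rw [hy]; linarith
  -- assemble
  have hsub : insert x (insert y (insert z D)) ⊆ Dle 3 (m + 5) s := by
    intro w hw
    simp only [Finset.mem_insert] at hw
    rcases hw with rfl | rfl | rfl | hw
    · exact hxmem
    · exact hymem
    · exact hzmem
    · rw [hD] at hw
      obtain ⟨j, hj, rfl⟩ := Finset.mem_image.mp hw
      simp only [Finset.mem_Icc] at hj
      exact hmem (j + 1) j hj.1 (by omega) (by omega) (by omega)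
  have hcard : (insert x (insert y (insert z D))).card = m + 7 := by
    rw [Finset.card_insert_of_notMem, Finset.card_insert_of_notMem,
      Finset.card_insert_of_notMem, hDcard]
    · intro h; exact absurd h (fun h => lt_irrefl z (hzgt z h))
    · simp only [Finset.mem_insert]
      rintro (rfl | h)
      · exact lt_irrefl y hyz
      · exact lt_irrefl y (hygt y h)
    · simp only [Finset.mem_insert]
      rintro (rfl | rfl | h)
      · exact lt_irrefl x hxy
      · exact lt_irrefl x (lt_trans hxy hyz)
      · exact hxnotD h
  calc m + 5 + 2 = (insert x (insert y (insert z D))).card := by rw [hcard]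
    _ ≤ (Dle 3 (m + 5) s).card := Finset.card_le_card hsub
end

section
/- For every n ≥ 5 there exists a convex set S of n real numbers with |D_3(S)| = n + 2. In particular, the set defined by s_1 = 0, s_2 = 10, s_3 = 23, s_4 = 40, and s_i = s_{i-1} + s_{i-2} - s_{i-4} for 5 ≤ i ≤ n, satisfies |D_3(S)| = n + 2. -/
/-- The Padovan-like difference sequence. -/
noncomputable def fdiff : ℕ → ℝ
  | 0 => 0
  | 1 => 10
  | 2 => 13
  | 3 => 17
  | (j+4) => fdiff (j+2) + fdiff (j+1)

lemma fdiff_succ_lt (j : ℕ) : 1 ≤ j → fdiff j < fdiff (j+1) := by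
  induction j using Nat.strong_induction_on with
  | _ j ih =>
    match j with
    | 0 => intro h; omega
    | 1 => intro _; norm_num [fdiff]
    | 2 => intro _; norm_num [fdiff]
    | 3 => intro _; show (_:ℝ) < fdiff 2 + fdiff 1; norm_num [fdiff]
    | (k+4) =>
      intro _
      have h1 := ih (k+1) (by omega) (by omega)
      have h2 := ih (k+2) (by omega) (by omega)
      have e1 : fdiff (k+4) = fdiff (k+2) + fdiff (k+1) := rfl
      have e2 : fdiff (k+4+1) = fdiff (k+3) + fdiff (k+2) := rfl
      rw [e1, e2]; linarith

lemma fdiff_lt (a b : ℕ) (ha : 1 ≤ a) (hab : a < b) : fdiff a < fdiff b := by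
  induction b with
  | zero => omega
  | succ m ih =>
    rcases Nat.lt_or_ge a m with h | h
    · exact (ih h).trans (fdiff_succ_lt m (by omega))
    · have : a = m := by omega
      subst this
      exact fdiff_succ_lt a ha

lemma fdiff_pos (j : ℕ) (hj : 1 ≤ j) : 0 < fdiff j := by
  rcases Nat.lt_or_ge 1 j with h | h
  · have := fdiff_lt 1 j le_rfl h
    have h1 : fdiff 1 = 10 := rfl
    linarith
  · have : j = 1 := by omega
    subst this; norm_num [fdiff]

/-- The set defined by s_1 = 0, s_2 = 10, s_3 = 23, s_4 = 40 and
s_i = s_{i-1} + s_{i-2} - s_{i-4} for 5 ≤ i ≤ n is a convex set of n elements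
with |D_3(S)| = n + 2.  In particular, for every n ≥ 5 there is a convex set S
of n reals with |D_3(S)| = n + 2. -/
theorem exists_convex_card_D3_eq (n : ℕ) (hn : 5 ≤ n) (s : ℕ → ℝ)
    (h1 : s 1 = 0) (h2 : s 2 = 10) (h3 : s 3 = 23) (h4 : s 4 = 40)
    (hrec : ∀ i, 5 ≤ i → i ≤ n → s i = s (i - 1) + s (i - 2) - s (i - 4)) :
    (∀ i, 1 ≤ i → i + 1 ≤ n → s i < s (i + 1)) ∧
      (∀ i, 1 ≤ i → i + 2 ≤ n → s (i + 1) - s i < s (i + 2) - s (i + 1)) ∧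
      (Dle 3 n s).card = n + 2 := by
  -- key: the consecutive differences equal fdiff
  have hd : ∀ i, 1 ≤ i → i + 1 ≤ n → s (i+1) - s i = fdiff i := by
    intro i
    induction i using Nat.strong_induction_on with
    | _ i ih =>
      match i with
      | 0 => intro h; omega
      | 1 => intro _ _; show s 2 - s 1 = fdiff 1; rw [h1, h2]; norm_num [fdiff]
      | 2 => intro _ _; show s 3 - s 2 = fdiff 2; rw [h2, h3]; norm_num [fdiff]
      | 3 => intro _ _; show s 4 - s 3 = fdiff 3; rw [h3, h4]; norm_num [fdiff]
      | (k+4) =>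
        intro _ hle
        have hr := hrec (k+5) (by omega) (by omega)
        simp only [show k+5-1 = k+4 from rfl, show k+5-2 = k+3 from rfl,
          show k+5-4 = k+1 from rfl] at hr
        have e1 := ih (k+1) (by omega) (by omega) (by omega)
        have e2 := ih (k+2) (by omega) (by omega) (by omega)
        have e3 : fdiff (k+4) = fdiff (k+2) + fdiff (k+1) := rfl
        show s (k+5) - s (k+4) = fdiff (k+4)
        rw [e3, hr]
        have : s (k+2) - s (k+1) = fdiff (k+1) := e1
        have : s (k+3) - s (k+2) = fdiff (k+2) := e2
        linarith
  -- gap 2 differences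
  have hd2 : ∀ y, 1 ≤ y → y + 2 ≤ n → s (y+2) - s y = fdiff (y+3) := by
    intro y hy hle
    have e1 := hd y hy (by omega)
    have e2 := hd (y+1) (by omega) (by omega)
    obtain ⟨m, rfl⟩ : ∃ m, y = m + 1 := ⟨y - 1, by omega⟩
    have e3 : fdiff (m+4) = fdiff (m+2) + fdiff (m+1) := rfl
    show s (m+3) - s (m+1) = fdiff (m+4)
    rw [e3]
    have : s (m+2) - s (m+1) = fdiff (m+1) := e1
    have : s (m+3) - s (m+2) = fdiff (m+2) := e2
    linarith
  -- gap 3 differences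
  have hd3 : ∀ y, 1 ≤ y → y + 3 ≤ n → s (y+3) - s y = fdiff (y+5) := by
    intro y hy hle
    have e1 := hd y hy (by omega)
    have e2 := hd (y+1) (by omega) (by omega)
    have e3 := hd (y+2) (by omega) (by omega)
    have e4 : fdiff (y+1+4) = fdiff (y+3) + fdiff (y+2) := rfl
    have e5 : fdiff (y+3) = fdiff ((y-1)+4) := by congr 1; omega
    obtain ⟨m, rfl⟩ : ∃ m, y = m + 1 := ⟨y - 1, by omega⟩
    have e6 : fdiff (m+4) = fdiff (m+2) + fdiff (m+1) := rfl
    show s (m+4) - s (m+1) = fdiff (m+6)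
    have e7 : fdiff (m+6) = fdiff (m+4) + fdiff (m+3) := rfl
    have a1 : s (m+2) - s (m+1) = fdiff (m+1) := e1
    have a2 : s (m+3) - s (m+2) = fdiff (m+2) := e2
    have a3 : s (m+4) - s (m+3) = fdiff (m+3) := e3
    rw [e7, e6]; linarith
  refine ⟨?_, ?_, ?_⟩
  · intro i hi hle
    have := hd i hi hle
    have := fdiff_pos i hi
    linarith
  · intro i hi hle
    have e1 := hd i hi (by omega)
    have e2 := hd (i+1) (by omega) (by omega)
    have := fdiff_succ_lt i hi
    linarith
  · have hset : Dle 3 n s = (Finset.Icc 1 (n+2)).image fdiff := by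
      ext v
      simp only [Dle, Finset.mem_image, Finset.mem_filter, Finset.mem_product,
        Finset.mem_Icc]
      constructor
      · rintro ⟨⟨x, y⟩, ⟨⟨⟨hx1, hxn⟩, hy1, hyn⟩, hg1, hg3⟩, rfl⟩
        simp only at hg1 hg3 ⊢
        rcases (by omega : x = y + 1 ∨ x = y + 2 ∨ x = y + 3) with rfl | rfl | rfl
        · exact ⟨y, ⟨by omega, by omega⟩, (hd y hy1 (by omega)).symm ▸ rfl⟩
        · exact ⟨y + 3, ⟨by omega, by omega⟩, (hd2 y hy1 (by omega)).symm ▸ rfl⟩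
        · exact ⟨y + 5, ⟨by omega, by omega⟩, (hd3 y hy1 (by omega)).symm ▸ rfl⟩
      · rintro ⟨j, ⟨hj1, hj2⟩, rfl⟩
        rcases (by omega : j + 1 ≤ n ∨ (n ≤ j ∧ j ≤ n + 1) ∨ j = n + 2) with h | h | h
        · exact ⟨(j+1, j), ⟨⟨⟨by omega, by omega⟩, by omega, by omega⟩,
            by simp <;> omega, by simp <;> omega⟩, hd j hj1 h⟩
        · refine ⟨(j-1, j-3), ⟨⟨⟨by omega, by omega⟩, by omega, by omega⟩,
            by simp <;> omega, by simp <;> omega⟩, ?_⟩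
          have := hd2 (j-3) (by omega) (by omega)
          have ex : j - 3 + 2 = j - 1 := by omega
          have ey : j - 3 + 3 = j := by omega
          rw [ex, ey] at this
          exact this
        · subst h
          refine ⟨(n, n-3), ⟨⟨⟨by omega, by omega⟩, by omega, by omega⟩,
            by simp <;> omega, by simp <;> omega⟩, ?_⟩
          have := hd3 (n-3) (by omega) (by omega)
          have ex : n - 3 + 3 = n := by omega
          have ey : n - 3 + 5 = n + 2 := by omega
          rw [ex, ey] at this
          exact this
    rw [hset, Finset.card_image_of_injOn, Nat.card_Icc]
    · omega
    · intro a ha b hb hab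
      simp only [Finset.coe_Icc, Set.mem_Icc] at ha hb
      by_contra hne
      rcases Nat.lt_or_ge a b with h | h
      · exact absurd hab (ne_of_lt (fdiff_lt a b ha.1 h))
      · exact absurd hab.symm (ne_of_lt (fdiff_lt b a hb.1 (by omega)))
end

section
/- The set S defined by s_1 = 0, s_2 = 10, s_3 = 23, s_4 = 40, and s_i = s_{i-1} + s_{i-2} - s_{i-4} for 5 ≤ i ≤ n (with n ≥ 5) is a 2-convex set: its consecutive differences are strictly increasing, and the consecutive differences of those differences are also strictly increasing. -/
/-- The set defined by s_1 = 0, s_2 = 10, s_3 = 23, s_4 = 40 and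
s_i = s_{i-1} + s_{i-2} - s_{i-4} for 5 ≤ i ≤ n (n ≥ 5) is 2-convex:
consecutive differences are strictly increasing and the consecutive differences
of those differences are strictly increasing. -/
theorem construction_two_convex (n : ℕ) (hn : 5 ≤ n) (s : ℕ → ℝ)
    (h1 : s 1 = 0) (h2 : s 2 = 10) (h3 : s 3 = 23) (h4 : s 4 = 40)
    (hrec : ∀ i, 5 ≤ i → i ≤ n → s i = s (i - 1) + s (i - 2) - s (i - 4)) :
    (∀ i, 1 ≤ i → i + 2 ≤ n → s (i + 1) - s i < s (i + 2) - s (i + 1)) ∧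
      (∀ i, 1 ≤ i → i + 3 ≤ n →
        (s (i + 2) - s (i + 1)) - (s (i + 1) - s i) <
          (s (i + 3) - s (i + 2)) - (s (i + 2) - s (i + 1))) := by
  have s5 : s 5 = 63 := by
    have h : s 5 = s 4 + s 3 - s 1 := hrec 5 (by norm_num) hn
    rw [h, h4, h3, h1]; norm_num
  have recE : ∀ k : ℕ, 1 ≤ k → k + 5 ≤ n →
      s (k+5) - 2*s (k+4) + s (k+3)
        = (s (k+3) - 2*s (k+2) + s (k+1)) + (s (k+2) - 2*s (k+1) + s k) := by
    intro k hk hkn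
    have hA : s (k+5) = s (k+4) + s (k+3) - s (k+1) := hrec (k+5) (by omega) hkn
    have hB : s (k+4) = s (k+3) + s (k+2) - s k := hrec (k+4) (by omega) (by omega)
    linarith
  have mono : ∀ k : ℕ, 1 ≤ k → k + 3 ≤ n →
      s (k+2) - 2*s (k+1) + s k < s (k+3) - 2*s (k+2) + s (k+1) := by
    intro k
    induction k using Nat.strong_induction_on with
    | _ k ih =>
      intro hk hkn
      rcases k with _ | _ | _ | _ | k
      · omega
      · show s 3 - 2*s 2 + s 1 < s 4 - 2*s 3 + s 2
        rw [h1, h2, h3, h4]; norm_num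
      · show s 4 - 2*s 3 + s 2 < s 5 - 2*s 4 + s 3
        rw [h2, h3, h4, s5]; norm_num
      · -- k = 3 : need s 6
        have h6 : s 6 = s 5 + s 4 - s 2 := hrec 6 (by norm_num) (by omega)
        show s 5 - 2*s 4 + s 3 < s 6 - 2*s 5 + s 4
        rw [h6, h2, h3, h4, s5]; norm_num
      · -- k + 4 case
        have hA : s (k+6) - 2*s (k+5) + s (k+4)
            = (s (k+4) - 2*s (k+3) + s (k+2)) + (s (k+3) - 2*s (k+2) + s (k+1)) :=
          recE (k+1) (by omega) (by omega)
        have hB : s (k+7) - 2*s (k+6) + s (k+5)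
            = (s (k+5) - 2*s (k+4) + s (k+3)) + (s (k+4) - 2*s (k+3) + s (k+2)) :=
          recE (k+2) (by omega) (by omega)
        have m1 : s (k+3) - 2*s (k+2) + s (k+1) < s (k+4) - 2*s (k+3) + s (k+2) :=
          ih (k+1) (by omega) (by omega) (by omega)
        have m2 : s (k+4) - 2*s (k+3) + s (k+2) < s (k+5) - 2*s (k+4) + s (k+3) :=
          ih (k+2) (by omega) (by omega) (by omega)
        show s (k+6) - 2*s (k+5) + s (k+4) < s (k+7) - 2*s (k+6) + s (k+5)
        linarith
  have pos : ∀ k : ℕ, 1 ≤ k → k + 2 ≤ n → 0 < s (k+2) - 2*s (k+1) + s k := by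
    intro k
    induction k with
    | zero => intro h; exact absurd h (by omega)
    | succ k ih =>
      intro _ hkn
      rcases Nat.eq_zero_or_pos k with hk0 | hk1
      · subst hk0
        show 0 < s 3 - 2*s 2 + s 1
        rw [h1, h2, h3]; norm_num
      · have hp := ih hk1 (by omega)
        have hm := mono k hk1 (by omega)
        show 0 < s (k+3) - 2*s (k+2) + s (k+1)
        linarith
  constructor
  · intro i hi hin
    have := pos i hi hin
    linarith
  · intro i hi hin
    have := mono i hi hin
    linarith
end

section
/- Let S = {s_1 < ... < s_n} be a convex set. Suppose for some indices i and j (with 1 ≤ i, i+4 ≤ n, 1 ≤ j, j+2 ≤ n) we have s_{i+2} - s_i = s_{j+1} - s_j and s_{i+3} - s_{i+1} = s_{j+2} - s_{j+1}. Then s_{i+3} - s_{i-1} < s_{j+2} - s_j < s_{i+4} - s_i (assuming i ≥ 2 for the left inequality). In particular, s_{j+2} - s_j lies strictly between two consecutive elements of D_{{4}}(S) = {s_{x+4} - s_x} and hence is not an element of D_{{4}}(S). -/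
lemma gap_mono_aux (n : ℕ) (s : ℕ → ℝ)
    (hconv : ∀ i, 1 ≤ i → i + 2 ≤ n → s (i + 1) - s i < s (i + 2) - s (i + 1))
    (a b : ℕ) (ha : 1 ≤ a) (hab : a ≤ b) (hb : b + 1 ≤ n) :
    s (a + 1) - s a ≤ s (b + 1) - s b := by
  induction b with
  | zero => omega
  | succ m ih =>
    rcases Nat.lt_or_ge a (m + 1) with h | h
    · have h1 := ih (by omega) (by omega)
      have h2 := hconv m (by omega) (by omega)
      linarith
    · have : a = m + 1 := by omega
      subst this; linarith

lemma D4_mono_aux (n : ℕ) (s : ℕ → ℝ)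
    (hconv : ∀ i, 1 ≤ i → i + 2 ≤ n → s (i + 1) - s i < s (i + 2) - s (i + 1))
    (x y : ℕ) (hx : 1 ≤ x) (hxy : x ≤ y) (hy : y + 4 ≤ n) :
    s (x + 4) - s x ≤ s (y + 4) - s y := by
  induction y with
  | zero => omega
  | succ m ih =>
    rcases Nat.lt_or_ge x (m + 1) with h | h
    · have h1 := ih (by omega) (by omega)
      have h2 := gap_mono_aux n s hconv m (m + 4) (by omega) (by omega) (by omega)
      have : s (m + 1 + 4) = s (m + 4 + 1) := by ring_nf
      linarith
    · have : x = m + 1 := by omega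
      subst this; linarith

/-- In a convex set, if s_{i+2} - s_i = s_{j+1} - s_j and
s_{i+3} - s_{i+1} = s_{j+2} - s_{j+1}, then
s_{i+3} - s_{i-1} < s_{j+2} - s_j < s_{i+4} - s_i, so s_{j+2} - s_j lies
strictly between two consecutive elements of D_{{4}}(S) and hence is not an
element of D_{{4}}(S) = {s_{x+4} - s_x : 1 ≤ x ≤ n - 4}. -/
theorem between_consecutive_D4 (n : ℕ) (s : ℕ → ℝ)
    (hmono : ∀ i, 1 ≤ i → i + 1 ≤ n → s i < s (i + 1))
    (hconv : ∀ i, 1 ≤ i → i + 2 ≤ n → s (i + 1) - s i < s (i + 2) - s (i + 1))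
    (i j : ℕ) (hi : 2 ≤ i) (hin : i + 4 ≤ n) (hj : 1 ≤ j) (hjn : j + 2 ≤ n)
    (h1 : s (i + 2) - s i = s (j + 1) - s j)
    (h2 : s (i + 3) - s (i + 1) = s (j + 2) - s (j + 1)) :
    s (i + 3) - s (i - 1) < s (j + 2) - s j ∧
      s (j + 2) - s j < s (i + 4) - s i ∧
      s (j + 2) - s j ∉
        ((Finset.Icc 1 (n - 4)).image (fun x => s (x + 4) - s x)) := by
  obtain ⟨k, rfl⟩ : ∃ k, i = k + 2 := ⟨i - 2, by omega⟩
  have e1 : k + 2 - 1 = k + 1 := by omega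
  rw [e1]
  have c1 := hconv (k + 1) (by omega) (by omega)
  have c2 := hconv (k + 2) (by omega) (by omega)
  have c3 := hconv (k + 3) (by omega) (by omega)
  have c4 := hconv (k + 4) (by omega) (by omega)
  have left : s (k + 2 + 3) - s (k + 1) < s (j + 2) - s j := by
    have : s (j + 2) - s j = (s (k + 2 + 2) - s (k + 2)) + (s (k + 2 + 3) - s (k + 2 + 1)) := by
      rw [h1, h2]; ring
    have e : (k + 2 + 3 : ℕ) = k + 5 := by ring
    simp only [show (k+2+2:ℕ)=k+4 from rfl, show (k+2+3:ℕ)=k+5 from rfl,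
      show (k+2+1:ℕ)=k+3 from rfl] at this ⊢
    linarith
  have right : s (j + 2) - s j < s (k + 2 + 4) - s (k + 2) := by
    have : s (j + 2) - s j = (s (k + 2 + 2) - s (k + 2)) + (s (k + 2 + 3) - s (k + 2 + 1)) := by
      rw [h1, h2]; ring
    simp only [show (k+2+2:ℕ)=k+4 from rfl, show (k+2+3:ℕ)=k+5 from rfl,
      show (k+2+1:ℕ)=k+3 from rfl, show (k+2+4:ℕ)=k+6 from rfl] at this ⊢
    linarith
  refine ⟨left, right, ?_⟩
  intro hmem
  obtain ⟨x, hx, hxe⟩ := Finset.mem_image.mp hmem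
  simp only [Finset.mem_Icc] at hx
  have hx4 : x + 4 ≤ n := by omega
  rcases Nat.lt_or_ge x (k + 2) with h | h
  · have := D4_mono_aux n s hconv x (k + 1) hx.1 (by omega) (by omega)
    have e : (k + 1 + 4 : ℕ) = k + 2 + 3 := by omega
    rw [e] at this
    linarith
  · have := D4_mono_aux n s hconv (k + 2) x (by omega) h hx4
    have e : (k + 2 + 4 : ℕ) = k + 6 := rfl
    linarith
end

section
/- Let S = {s_1 < ... < s_n} be a 2-convex set. Suppose for indices i < j < j' (all within range) we have s_{i+2} - s_i = s_{j+1} - s_j and s_{i+3} - s_{i+1} = s_{j'+1} - s_{j'} with j' > j. Then j' = j + 1. -/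
lemma aux_dmono (n : ℕ) (s : ℕ → ℝ)
    (hconv : ∀ i, 1 ≤ i → i + 2 ≤ n → s (i + 1) - s i < s (i + 2) - s (i + 1)) :
    ∀ a b, 1 ≤ a → a ≤ b → b + 1 ≤ n → s (a + 1) - s a ≤ s (b + 1) - s b := by
  intro a b ha hab
  induction b, hab using Nat.le_induction with
  | base => intro _; exact le_refl _
  | succ b hb ih =>
    intro hbn
    have h := hconv b (ha.trans hb) (by omega)
    have e1 : b + 1 + 1 = b + 2 := rfl
    rw [e1]
    exact (ih (by omega)).trans h.le

lemma aux_gmono (n : ℕ) (s : ℕ → ℝ)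
    (hconv2 : ∀ i, 1 ≤ i → i + 3 ≤ n →
      (s (i + 2) - s (i + 1)) - (s (i + 1) - s i) <
        (s (i + 3) - s (i + 2)) - (s (i + 2) - s (i + 1))) :
    ∀ a b, 1 ≤ a → a ≤ b → b + 2 ≤ n →
      (s (a + 2) - s (a + 1)) - (s (a + 1) - s a) ≤
        (s (b + 2) - s (b + 1)) - (s (b + 1) - s b) := by
  intro a b ha hab
  induction b, hab using Nat.le_induction with
  | base => intro _; exact le_refl _
  | succ b hb ih =>
    intro hbn
    have h := hconv2 b (ha.trans hb) (by omega)
    have e1 : b + 1 + 1 = b + 2 := rfl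
    have e2 : b + 1 + 2 = b + 3 := rfl
    rw [e1, e2]
    exact (ih (by omega)).trans h.le

/-- In a 2-convex set, if s_{i+2} - s_i = s_{j+1} - s_j and
s_{i+3} - s_{i+1} = s_{j'+1} - s_{j'} with i < j < j', then j' = j + 1. -/
theorem two_convex_forces_consecutive (n : ℕ) (s : ℕ → ℝ)
    (hmono : ∀ i, 1 ≤ i → i + 1 ≤ n → s i < s (i + 1))
    (hconv : ∀ i, 1 ≤ i → i + 2 ≤ n → s (i + 1) - s i < s (i + 2) - s (i + 1))
    (hconv2 : ∀ i, 1 ≤ i → i + 3 ≤ n →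
      (s (i + 2) - s (i + 1)) - (s (i + 1) - s i) <
        (s (i + 3) - s (i + 2)) - (s (i + 2) - s (i + 1)))
    (i j j' : ℕ) (hi : 1 ≤ i) (hij : i < j) (hjj' : j < j')
    (hin : i + 3 ≤ n) (hj'n : j' + 1 ≤ n)
    (h1 : s (i + 2) - s i = s (j + 1) - s j)
    (h2 : s (i + 3) - s (i + 1) = s (j' + 1) - s j') :
    j' = j + 1 := by
  by_contra hne
  have hj'2 : j + 2 ≤ j' := by omega
  -- d_i > 0
  have hdi : 0 < s (i + 1) - s i := by
    have := hmono i hi (by omega)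
    linarith
  -- j ≥ i + 2
  have hji2 : i + 2 ≤ j := by
    by_contra hlt
    have hj : j = i + 1 := by omega
    subst hj
    have e1 : i + 1 + 1 = i + 2 := rfl
    rw [e1] at h1
    linarith
  -- d_{j'} ≥ d_{j+2}
  have hdm : s (j + 2 + 1) - s (j + 2) ≤ s (j' + 1) - s j' :=
    aux_dmono n s hconv (j + 2) j' (by omega) hj'2 hj'n
  -- Δd_{i+1} < Δd_j
  have hg1 : (s (i + 1 + 2) - s (i + 1 + 1)) - (s (i + 1 + 1) - s (i + 1)) <
      (s (j + 2) - s (j + 1)) - (s (j + 1) - s j) := by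
    have hstep := hconv2 (i + 1) (by omega) (by omega)
    have hle := aux_gmono n s hconv2 (i + 2) j (by omega) hji2 (by omega)
    have e1 : i + 1 + 1 = i + 2 := rfl
    have e2 : i + 1 + 2 = i + 3 := rfl
    have e3 : i + 2 + 1 = i + 3 := rfl
    have e4 : i + 2 + 2 = i + 4 := rfl
    rw [e1, e2]
    rw [e3, e4] at hle
    rw [e1, e2] at hstep
    linarith
  -- Δd_i < Δd_{j+1}
  have hg2 : (s (i + 2) - s (i + 1)) - (s (i + 1) - s i) <
      (s (j + 1 + 2) - s (j + 1 + 1)) - (s (j + 1 + 1) - s (j + 1)) := by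
    have hstep := hconv2 i hi (by omega)
    have hle := aux_gmono n s hconv2 (i + 1) (j + 1) (by omega) (by omega) (by omega)
    have e1 : i + 1 + 1 = i + 2 := rfl
    have e2 : i + 1 + 2 = i + 3 := rfl
    rw [e1, e2] at hle
    linarith
  have e5 : j + 1 + 1 = j + 2 := rfl
  have e6 : j + 1 + 2 = j + 3 := rfl
  have e7 : j + 2 + 1 = j + 3 := rfl
  have e8 : i + 1 + 1 = i + 2 := rfl
  have e9 : i + 1 + 2 = i + 3 := rfl
  rw [e5, e6] at hg2
  rw [e8, e9] at hg1
  rw [e7] at hdm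
  linarith
end

section
/- For every n ≥ 5 there exists a convex set S of n real numbers such that |D_4(S)| ≤ 2n - 2, where D_4(S) = {s_x - s_y : 1 ≤ x - y ≤ 4}. -/
lemma exists_plastic : ∃ r : ℝ, 1 < r ∧ r ^ 3 = r + 1 := by
  have hc : ContinuousOn (fun x : ℝ => x ^ 3 - x - 1) (Set.Icc 1 2) :=
    (Continuous.continuousOn (by continuity))
  have hiv := intermediate_value_Icc (by norm_num : (1:ℝ) ≤ 2) hc
  have h0 : (0:ℝ) ∈ Set.Icc ((1:ℝ) ^ 3 - 1 - 1) ((2:ℝ) ^ 3 - 2 - 1) := by norm_num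
  obtain ⟨r, hr, hr0⟩ := hiv h0
  simp only at hr0
  refine ⟨r, ?_, by linarith⟩
  rcases eq_or_lt_of_le hr.1 with h | h
  · exfalso; rw [← h] at hr0; norm_num at hr0
  · exact h

/-- For every n ≥ 5 there exists a convex set S of n real numbers with
|D_4(S)| ≤ 2n - 2. -/
theorem exists_convex_card_D4_le (n : ℕ) (hn : 5 ≤ n) :
    ∃ s : ℕ → ℝ,
      (∀ i, 1 ≤ i → i + 1 ≤ n → s i < s (i + 1)) ∧
      (∀ i, 1 ≤ i → i + 2 ≤ n → s (i + 1) - s i < s (i + 2) - s (i + 1)) ∧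
      (Dle 4 n s).card ≤ 2 * n - 2 := by
  obtain ⟨r, hr1, h3⟩ := exists_plastic
  have hrpos : (0:ℝ) < r := by linarith
  have hne : r - 1 ≠ 0 := ne_of_gt (by linarith)
  set s : ℕ → ℝ := fun i => r ^ i / (r - 1) with hs
  have e1 : ∀ y : ℕ, s (y + 1) - s y = r ^ y := by
    intro y
    simp only [hs]
    field_simp
    rw [pow_succ]; ring
  have e2 : ∀ y : ℕ, s (y + 2) - s y = r ^ (y + 3) := by
    intro y
    simp only [hs]
    field_simp
    linear_combination (r ^ y * (1 - r)) * h3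
  have e3 : ∀ y : ℕ, s (y + 3) - s y = r ^ (y + 5) := by
    intro y
    simp only [hs]
    field_simp
    linear_combination (r ^ y * (1 - r ^ 3 + r ^ 2 - r)) * h3
  have e4 : ∀ y : ℕ, s (y + 4) - s y = (r ^ 3 + r ^ 5) * r ^ y := by
    intro y
    simp only [hs]
    field_simp
    linear_combination (r ^ y * (1 - r ^ 3 + r ^ 2 - r)) * h3
  refine ⟨s, ?_, ?_, ?_⟩
  · intro i _ _
    have := e1 i
    nlinarith [pow_pos hrpos i]
  · intro i _ _
    rw [e1 i, show i + 2 = (i + 1) + 1 from rfl, e1 (i + 1)]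
    have : r ^ i < r ^ (i + 1) := by
      rw [pow_succ]
      nlinarith [pow_pos hrpos i]
    exact this
  · set P := (Finset.Icc 1 (n + 2)).image (fun i => r ^ i) with hP
    set Q := (Finset.Icc 1 (n - 4)).image (fun i => (r ^ 3 + r ^ 5) * r ^ i) with hQ
    have hsub : Dle 4 n s ⊆ P ∪ Q := by
      intro v hv
      simp only [Dle, Finset.mem_image, Finset.mem_filter, Finset.mem_product,
        Finset.mem_Icc] at hv
      obtain ⟨⟨x, y⟩, ⟨⟨⟨hx1, hxn⟩, hy1, hyn⟩, hd1, hd4⟩, hv⟩ := hv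
      simp only at hv hd1 hd4
      obtain ⟨d, hxd, hd1', hd4'⟩ : ∃ d, x = y + d ∧ 1 ≤ d ∧ d ≤ 4 :=
        ⟨x - y, by omega, hd1, hd4⟩
      subst hxd
      rw [Finset.mem_union]
      interval_cases d
      · left
        rw [hP, Finset.mem_image]
        exact ⟨y, Finset.mem_Icc.2 ⟨hy1, by omega⟩, by rw [← hv]; exact (e1 y).symm⟩
      · left
        rw [hP, Finset.mem_image]
        exact ⟨y + 3, Finset.mem_Icc.2 ⟨by omega, by omega⟩, by rw [← hv]; exact (e2 y).symm⟩
      · left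
        rw [hP, Finset.mem_image]
        exact ⟨y + 5, Finset.mem_Icc.2 ⟨by omega, by omega⟩, by rw [← hv]; exact (e3 y).symm⟩
      · right
        rw [hQ, Finset.mem_image]
        exact ⟨y, Finset.mem_Icc.2 ⟨hy1, by omega⟩, by rw [← hv]; exact (e4 y).symm⟩
    calc (Dle 4 n s).card ≤ (P ∪ Q).card := Finset.card_le_card hsub
      _ ≤ P.card + Q.card := Finset.card_union_le _ _
      _ ≤ (n + 2) + (n - 4) := by
          apply Nat.add_le_add
          · exact le_trans (Finset.card_image_le) (by rw [Nat.card_Icc]; omega)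
          · exact le_trans (Finset.card_image_le) (by rw [Nat.card_Icc]; omega)
      _ ≤ 2 * n - 2 := by omega
end

section
/- Let S = {s_1 < ... < s_n} be a convex set and let S_1, ..., S_t be disjoint consecutive blocks of S, each of size i (so t = ⌊n/i⌋). Then the sumsets S_j + S_j, for j = 1, ..., t, are pairwise disjoint; consequently |S + S| ≥ Σ_{j=1}^t |S_j + S_j|. -/
open Pointwise

private lemma mono_le_aux (n : ℕ) (s : ℕ → ℝ)
    (hmono : ∀ k, 1 ≤ k → k + 1 ≤ n → s k < s (k + 1)) :
    ∀ a b, 1 ≤ a → a ≤ b → b ≤ n → s a ≤ s b := by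
  intro a b ha hab hbn
  induction b with
  | zero => omega
  | succ m ih =>
    rcases Nat.lt_or_ge a (m+1) with h | h
    · have h1 : s a ≤ s m := ih (by omega) (by omega)
      have h2 : s m < s (m+1) := hmono m (by omega) hbn
      linarith
    · have : a = m + 1 := by omega
      simp [this]

private lemma mono_lt_aux (n : ℕ) (s : ℕ → ℝ)
    (hmono : ∀ k, 1 ≤ k → k + 1 ≤ n → s k < s (k + 1)) :
    ∀ a b, 1 ≤ a → a < b → b ≤ n → s a < s b := by
  intro a b ha hab hbn
  obtain ⟨m, rfl⟩ : ∃ m, b = m + 1 := ⟨b - 1, by omega⟩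
  have h1 : s a ≤ s m := mono_le_aux n s hmono a m ha (by omega) (by omega)
  have h2 : s m < s (m+1) := hmono m (by omega) hbn
  linarith

/-- Splitting a convex set S = {s_1 < ... < s_n} into t = ⌊n/i⌋ consecutive
blocks S_j = {s_{(j-1)i+1}, ..., s_{ji}} of size i, the sumsets S_j + S_j are
pairwise disjoint, and hence |S + S| ≥ ∑_j |S_j + S_j|. -/
theorem blocks_sumsets_disjoint (n i : ℕ) (hi : 1 ≤ i) (s : ℕ → ℝ)
    (hmono : ∀ k, 1 ≤ k → k + 1 ≤ n → s k < s (k + 1))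
    (hconv : ∀ k, 1 ≤ k → k + 2 ≤ n → s (k + 1) - s k < s (k + 2) - s (k + 1)) :
    (∀ j k : ℕ, 1 ≤ j → j < k → k ≤ n / i →
        Disjoint
          (((Finset.Icc ((j - 1) * i + 1) (j * i)).image s) +
            ((Finset.Icc ((j - 1) * i + 1) (j * i)).image s))
          (((Finset.Icc ((k - 1) * i + 1) (k * i)).image s) +
            ((Finset.Icc ((k - 1) * i + 1) (k * i)).image s))) ∧
      (∑ j ∈ Finset.Icc 1 (n / i),
          (((Finset.Icc ((j - 1) * i + 1) (j * i)).image s) +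
            ((Finset.Icc ((j - 1) * i + 1) (j * i)).image s)).card) ≤
        (((Finset.Icc 1 n).image s) + ((Finset.Icc 1 n).image s)).card := by
  have key : ∀ j k : ℕ, 1 ≤ j → j < k → k ≤ n / i →
      Disjoint
        (((Finset.Icc ((j - 1) * i + 1) (j * i)).image s) +
          ((Finset.Icc ((j - 1) * i + 1) (j * i)).image s))
        (((Finset.Icc ((k - 1) * i + 1) (k * i)).image s) +
          ((Finset.Icc ((k - 1) * i + 1) (k * i)).image s)) := by
    intro j k hj hjk hk
    have hkn : k * i ≤ n := (Nat.le_div_iff_mul_le hi).mp hk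
    rw [Finset.disjoint_left]
    intro x hx hx'
    rw [Finset.mem_add] at hx hx'
    obtain ⟨a, ha, b, hb, rfl⟩ := hx
    obtain ⟨c, hc, d, hd, habs⟩ := hx'
    simp only [Finset.mem_image, Finset.mem_Icc] at ha hb hc hd
    obtain ⟨p, hp, rfl⟩ := ha
    obtain ⟨q, hq, rfl⟩ := hb
    obtain ⟨r, hr, rfl⟩ := hc
    obtain ⟨w, hw, rfl⟩ := hd
    -- s p + s q ≤ 2 s (j*i) < 2 s ((k-1)*i+1) ≤ s r + s w
    have hji : j * i < (k-1) * i + 1 := by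
      have : j * i ≤ (k-1) * i := Nat.mul_le_mul_right i (by omega)
      omega
    have hkin : (k-1) * i + 1 ≤ n := by
      have : ((k-1)*i + 1) ≤ k * i := by nlinarith [Nat.sub_add_cancel hj, hjk]
      omega
    have hmid : s (j * i) < s ((k-1) * i + 1) :=
      mono_lt_aux n s hmono _ _ (by nlinarith) hji hkin
    have h1 : s p ≤ s (j*i) := mono_le_aux n s hmono _ _ (by omega) hp.2 (by omega)
    have h2 : s q ≤ s (j*i) := mono_le_aux n s hmono _ _ (by omega) hq.2 (by omega)
    have h3 : s ((k-1)*i+1) ≤ s r := mono_le_aux n s hmono _ _ (by omega) hr.1 (by omega)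
    have h4 : s ((k-1)*i+1) ≤ s w := mono_le_aux n s hmono _ _ (by omega) hw.1 (by omega)
    linarith
  refine ⟨key, ?_⟩
  set T : ℕ → Finset ℝ := fun j =>
    (((Finset.Icc ((j - 1) * i + 1) (j * i)).image s) +
      ((Finset.Icc ((j - 1) * i + 1) (j * i)).image s)) with hT
  have hdisj : ∀ j ∈ Finset.Icc 1 (n/i), ∀ k ∈ Finset.Icc 1 (n/i), j ≠ k →
      Disjoint (T j) (T k) := by
    intro j hj k hk hne
    simp only [Finset.mem_Icc] at hj hk
    rcases Nat.lt_or_ge j k with h | h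
    · exact key j k hj.1 h hk.2
    · exact (key k j hk.1 (by omega) hj.2).symm
  have hsub : ∀ j ∈ Finset.Icc 1 (n/i), T j ⊆
      (((Finset.Icc 1 n).image s) + ((Finset.Icc 1 n).image s)) := by
    intro j hj
    simp only [Finset.mem_Icc] at hj
    have hjn : j * i ≤ n := (Nat.le_div_iff_mul_le hi).mp hj.2
    apply Finset.add_subset_add <;>
      exact Finset.image_subset_image (Finset.Icc_subset_Icc (by omega) hjn)
  calc ∑ j ∈ Finset.Icc 1 (n/i), (T j).card
      = ((Finset.Icc 1 (n/i)).biUnion T).card := (Finset.card_biUnion hdisj).symm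
    _ ≤ _ := Finset.card_le_card (by
        intro x hx
        rw [Finset.mem_biUnion] at hx
        obtain ⟨j, hj, hxj⟩ := hx
        exact hsub j hj hxj)
end

section
/- Let S = {s_1 < ... < s_n} be a convex set with n ≥ 5, and suppose |D_3(S)| = n + 1. Then s_4 - s_3 = s_3 - s_1 and s_4 - s_1 = s_5 - s_3, which forces s_5 - s_4 = s_4 - s_3, contradicting convexity. That is, no convex set with n ≥ 5 has |D_3(S)| = n + 1. -/
lemma mem_Dle (k n : ℕ) (s : ℕ → ℝ) (x y : ℕ) (h1 : 1 ≤ y) (h2 : x ≤ n)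
    (h3 : 1 ≤ x - y) (h4 : x - y ≤ k) : s x - s y ∈ Dle k n s := by
  simp only [Dle, Finset.mem_image, Finset.mem_filter, Finset.mem_product, Finset.mem_Icc]
  exact ⟨(x, y), ⟨⟨⟨by omega, h2⟩, ⟨h1, by omega⟩⟩, h3, h4⟩, rfl⟩

/-- No convex set S = {s_1 < ... < s_n} with n ≥ 5 has |D_3(S)| = n + 1. -/
theorem no_convex_card_D3_eq (n : ℕ) (hn : 5 ≤ n) (s : ℕ → ℝ)
    (hmono : ∀ i, 1 ≤ i → i + 1 ≤ n → s i < s (i + 1))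
    (hconv : ∀ i, 1 ≤ i → i + 2 ≤ n → s (i + 1) - s i < s (i + 2) - s (i + 1))
    (hcard : (Dle 3 n s).card = n + 1) : False := by
  set g : ℕ → ℝ := fun i =>
    if i ≤ n - 1 then s (i + 1) - s i else if i = n then s n - s (n - 2) else s n - s (n - 3)
    with hg
  have hgval : ∀ i, i ≤ n - 1 → g i = s (i + 1) - s i := by
    intro i h; simp [hg, h]
  have hgn : g n = s n - s (n - 2) := by
    simp only [hg]; rw [if_neg (by omega : ¬ n ≤ n - 1)]; simp
  have hgn1 : g (n + 1) = s n - s (n - 3) := by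
    simp only [hg]; rw [if_neg (by omega), if_neg (by omega)]
  -- adjacent monotonicity
  have hadj : ∀ i, 1 ≤ i → i ≤ n → g i < g (i + 1) := by
    intro i h1 h2
    rcases lt_trichotomy i (n - 1) with h | h | h
    · rw [hgval i (by omega), hgval (i + 1) (by omega)]
      have := hconv i h1 (by omega)
      rw [(by omega : i + 2 = i + 1 + 1)] at this
      exact this
    · subst h
      rw [hgval (n - 1) le_rfl, (by omega : n - 1 + 1 = n), hgn]
      have := hmono (n - 2) (by omega) (by omega)
      rw [(by omega : n - 2 + 1 = n - 1)] at this
      linarith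
    · have hi : i = n := by omega
      rw [hi, hgn, hgn1]
      have := hmono (n - 3) (by omega) (by omega)
      rw [(by omega : n - 3 + 1 = n - 2)] at this
      linarith
  have hgs : ∀ i j, 1 ≤ i → i < j → j ≤ n + 1 → g i < g j := by
    intro i j h1 h2 h3
    induction j with
    | zero => omega
    | succ j ih =>
      rcases eq_or_lt_of_le (Nat.lt_succ_iff.mp h2) with h | h
      · subst h; exact hadj i h1 (by omega)
      · exact lt_trans (ih h (by omega)) (hadj j (by omega) (by omega))
  -- each g i is in Dle 3 n s
  have hgmem : ∀ i, 1 ≤ i → i ≤ n + 1 → g i ∈ Dle 3 n s := by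
    intro i h1 h2
    rcases le_or_gt i (n - 1) with h | h
    · rw [hgval i h]
      exact mem_Dle 3 n s (i + 1) i h1 (by omega) (by omega) (by omega)
    · rcases eq_or_lt_of_le (by omega : i ≤ n + 1) with h' | h'
      · rw [h', hgn1]
        exact mem_Dle 3 n s n (n - 3) (by omega) le_rfl (by omega) (by omega)
      · rw [(by omega : i = n), hgn]
        exact mem_Dle 3 n s n (n - 2) (by omega) le_rfl (by omega) (by omega)
  -- the image of Icc 1 (n+1) under g equals Dle 3 n s
  have hsub : (Finset.Icc 1 (n + 1)).image g ⊆ Dle 3 n s := by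
    intro t ht
    rcases Finset.mem_image.mp ht with ⟨i, hi, rfl⟩
    rw [Finset.mem_Icc] at hi
    exact hgmem i hi.1 hi.2
  have hcardimg : ((Finset.Icc 1 (n + 1)).image g).card = n + 1 := by
    rw [Finset.card_image_of_injOn, Nat.card_Icc]
    · omega
    · intro a ha b hb hab
      rw [Finset.mem_coe, Finset.mem_Icc] at ha hb
      by_contra hne
      rcases lt_or_gt_of_ne hne with h | h
      · exact absurd hab (ne_of_lt (hgs a b ha.1 h hb.2))
      · exact absurd hab.symm (ne_of_lt (hgs b a hb.1 h ha.2))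
  have heq : (Finset.Icc 1 (n + 1)).image g = Dle 3 n s :=
    Finset.eq_of_subset_of_card_le hsub (by omega)
  have hmemD : ∀ x y : ℕ, 1 ≤ y → x ≤ n → 1 ≤ x - y → x - y ≤ 3 →
      ∃ j, 1 ≤ j ∧ j ≤ n + 1 ∧ s x - s y = g j := by
    intro x y h1 h2 h3 h4
    have := mem_Dle 3 n s x y h1 h2 h3 h4
    rw [← heq, Finset.mem_image] at this
    rcases this with ⟨j, hj, hje⟩
    rw [Finset.mem_Icc] at hj
    exact ⟨j, hj.1, hj.2, hje.symm⟩
  -- key recursion: s (i+2) - s i = g (i+2) for 1 ≤ i ≤ n - 3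
  have key : ∀ m : ℕ, ∀ i, 1 ≤ i → i = n - 3 - m → s (i + 2) - s i = g (i + 2) := by
    intro m
    induction m with
    | zero =>
      intro i h1 h2
      have hi : i = n - 3 := by omega
      obtain ⟨j, hj1, hj2, hje⟩ := hmemD (i + 2) i h1 (by omega) (by omega) (by omega)
      have hlow : g (i + 1) < s (i + 2) - s i := by
        rw [hgval (i + 1) (by omega), (by omega : i + 1 + 1 = i + 2)]
        have := hmono i h1 (by omega)
        linarith
      have hhigh : s (i + 2) - s i < g n := by
        rw [hgn, hi, (by omega : n - 3 + 2 = n - 1)]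
        have c1 := hconv (n - 3) (by omega) (by omega)
        rw [(by omega : n - 3 + 1 = n - 2), (by omega : n - 3 + 2 = n - 1)] at c1
        have c2 := hconv (n - 2) (by omega) (by omega)
        rw [(by omega : n - 2 + 1 = n - 1), (by omega : n - 2 + 2 = n)] at c2
        linarith
      have hj3 : i + 1 < j := by
        by_contra h
        push_neg at h
        rcases eq_or_lt_of_le h with h' | h'
        · rw [hje, h'] at hlow; linarith
        · have := hgs j (i + 1) hj1 h' (by omega)
          rw [← hje] at this; linarith
      have hj4 : j < n := by
        by_contra h
        push_neg at h
        rcases eq_or_lt_of_le h with h' | h'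
        · rw [hje, ← h'] at hhigh; linarith
        · have := hgs n j (by omega) h' hj2
          rw [← hje] at this; linarith
      have : j = i + 2 := by omega
      rw [hje, this]
    | succ m ih =>
      intro i h1 h2
      have hi1 : i + 1 = n - 3 - m := by omega
      have IH := ih (i + 1) (by omega) hi1
      obtain ⟨j, hj1, hj2, hje⟩ := hmemD (i + 2) i h1 (by omega) (by omega) (by omega)
      have hlow : g (i + 1) < s (i + 2) - s i := by
        rw [hgval (i + 1) (by omega), (by omega : i + 1 + 1 = i + 2)]
        have := hmono i h1 (by omega)
        linarith
      have hhigh : s (i + 2) - s i < g (i + 3) := by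
        rw [(by omega : i + 3 = i + 1 + 2), ← IH, (by omega : i + 1 + 2 = i + 3)]
        have h5 := hconv i h1 (by omega)
        rw [(by omega : i + 2 = i + 1 + 1)] at h5
        have h6 := hconv (i + 1) (by omega) (by omega)
        rw [(by omega : i + 1 + 1 = i + 2), (by omega : i + 1 + 2 = i + 3)] at h6
        rw [(by omega : i + 2 = i + 1 + 1)] at h6
        linarith
      have hj3 : i + 1 < j := by
        by_contra h
        push_neg at h
        rcases eq_or_lt_of_le h with h' | h'
        · rw [hje, h'] at hlow; linarith
        · have := hgs j (i + 1) hj1 h' (by omega)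
          rw [← hje] at this; linarith
      have hj4 : j < i + 3 := by
        by_contra h
        push_neg at h
        rcases eq_or_lt_of_le h with h' | h'
        · rw [hje, ← h'] at hhigh; linarith
        · have := hgs (i + 3) j (by omega) h' hj2
          rw [← hje] at this; linarith
      have : j = i + 2 := by omega
      rw [hje, this]
  have hrec : ∀ i, 1 ≤ i → i ≤ n - 3 → s (i + 2) - s i = s (i + 3) - s (i + 2) := by
    intro i h1 h2
    have h := key (n - 3 - i) i h1 (by omega)
    rw [hgval (i + 2) (by omega), (by omega : i + 2 + 1 = i + 3)] at h
    exact h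
  -- Now derive the contradiction using s 4 - s 1
  have e1 := hrec 1 le_rfl (by omega)
  have e2 := hrec 2 (by omega) (by omega)
  norm_num at e1 e2
  obtain ⟨j, hj1, hj2, hje⟩ := hmemD 4 1 le_rfl (by omega) (by omega) (by omega)
  have hc2 := hconv 2 (by omega) (by omega)
  have hc3 := hconv 3 (by omega) (by omega)
  norm_num at hc2 hc3
  have hg4 : g 4 = s 5 - s 4 := by
    rw [hgval 4 (by omega)]
  have hlow : g 4 < s 4 - s 1 := by rw [hg4]; linarith
  have hg5 : g 5 = s 5 - s 3 := by
    rcases eq_or_lt_of_le hn with h | h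
    · rw [← h] at hgn
      rw [hgn]
    · have h3 := hrec 3 (by omega) (by omega)
      norm_num at h3
      rw [hgval 5 (by omega)]
      norm_num
      linarith
  have hhigh : s 4 - s 1 < g 5 := by rw [hg5]; linarith
  rcases le_or_gt j 4 with h | h
  · rcases eq_or_lt_of_le h with h' | h'
    · rw [hje, h'] at hlow; linarith
    · have := hgs j 4 hj1 h' (by omega)
      rw [← hje] at this; linarith
  · rcases eq_or_lt_of_le (by omega : 5 ≤ j) with h' | h'
    · rw [hje, ← h'] at hhigh; linarith
    · have := hgs 5 j (by omega) h' hj2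
      rw [← hje] at this; linarith
end

section
/- Let S = {s_1 < ... < s_n} be a convex set, let I ⊆ {1, ..., n-3} be a set of indices such that for every i ∈ I, both s_{i+2} - s_i and s_{i+3} - s_{i+1} are consecutive differences of S (i.e., belong to D_{{1}}(S) = {s_{j+1} - s_j}). If |D_{{2}}(S) \ D_{{1}}(S)| = m, then |I| ≥ (n - 3) - 2m. -/
/-- Let S = {s_1 < ... < s_n} be convex, let D1 = {s_{j+1} - s_j} and
D2 = {s_{j+2} - s_j}, and let I be the set of indices 1 ≤ i ≤ n - 3 such that
both s_{i+2} - s_i and s_{i+3} - s_{i+1} belong to D1.  If |D2 \ D1| = m, then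
|I| ≥ (n - 3) - 2m. -/
theorem card_good_indices (n : ℕ) (s : ℕ → ℝ) (m : ℕ)
    (hmono : ∀ i, 1 ≤ i → i + 1 ≤ n → s i < s (i + 1))
    (hconv : ∀ i, 1 ≤ i → i + 2 ≤ n → s (i + 1) - s i < s (i + 2) - s (i + 1))
    (hm : (((Finset.Icc 1 (n - 2)).image (fun j => s (j + 2) - s j)) \
            ((Finset.Icc 1 (n - 1)).image (fun j => s (j + 1) - s j))).card = m) :
    (n : ℤ) - 3 - 2 * m ≤
      (((Finset.Icc 1 (n - 3)).filter (fun i =>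
        s (i + 2) - s i ∈ (Finset.Icc 1 (n - 1)).image (fun j => s (j + 1) - s j) ∧
        s (i + 3) - s (i + 1) ∈
          (Finset.Icc 1 (n - 1)).image (fun j => s (j + 1) - s j))).card : ℤ) := by
  set D1 := (Finset.Icc 1 (n - 1)).image (fun j => s (j + 1) - s j) with hD1
  set D2 := (Finset.Icc 1 (n - 2)).image (fun j => s (j + 2) - s j) with hD2
  -- first differences strictly increasing
  have hd : ∀ i j : ℕ, 1 ≤ i → i < j → j + 1 ≤ n →
      s (i + 1) - s i < s (j + 1) - s j := by
    intro i j hi hij hjn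
    induction j, hij using Nat.le_induction with
    | base => exact hconv i hi (by omega)
    | succ j hij ih =>
      exact (ih (by omega)).trans (hconv j (by omega) (by omega))
  -- second differences strictly increasing
  have hg : ∀ a b : ℕ, 1 ≤ a → a < b → b + 2 ≤ n →
      s (a + 2) - s a < s (b + 2) - s b := by
    intro a b ha hab hbn
    have h1 := hd a b ha hab (by omega)
    have h2 := hd (a + 1) (b + 1) (by omega) (by omega) (by omega)
    have e1 : s (a + 1 + 1) = s (a + 2) := by norm_num
    have e2 : s (b + 1 + 1) = s (b + 2) := by norm_num
    rw [e1, e2] at h2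
    linarith
  have ginj : ∀ a b : ℕ, 1 ≤ a → 1 ≤ b → a + 2 ≤ n → b + 2 ≤ n →
      s (a + 2) - s a = s (b + 2) - s b → a = b := by
    intro a b ha hb han hbn heq
    rcases lt_trichotomy a b with h | h | h
    · exact absurd heq (ne_of_lt (hg a b ha h hbn))
    · exact h
    · exact absurd heq.symm (ne_of_lt (hg b a hb h han))
  set B := (Finset.Icc 1 (n - 3)).filter
    (fun i => ¬ (s (i + 2) - s i ∈ D1 ∧ s (i + 3) - s (i + 1) ∈ D1)) with hB
  have hsplit : ((Finset.Icc 1 (n - 3)).filter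
      (fun i => s (i + 2) - s i ∈ D1 ∧ s (i + 3) - s (i + 1) ∈ D1)).card + B.card
      = n - 3 := by
    rw [hB, Finset.card_filter_add_card_filter_not, Nat.card_Icc]
    omega
  set f : ℕ → ℝ := fun i =>
    if s (i + 2) - s i ∈ D1 then s (i + 3) - s (i + 1) else s (i + 2) - s i with hf
  -- each bad index maps into D2 \ D1
  have hmaps : ∀ i ∈ B, f i ∈ D2 \ D1 := by
    intro i hi
    rw [hB, Finset.mem_filter, Finset.mem_Icc] at hi
    obtain ⟨⟨hi1, hi3⟩, hnp⟩ := hi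
    have hn4 : 4 ≤ n := by omega
    rw [Finset.mem_sdiff]
    by_cases h1 : s (i + 2) - s i ∈ D1
    · have h2 : s (i + 3) - s (i + 1) ∉ D1 := fun h => hnp ⟨h1, h⟩
      simp only [hf, if_pos h1]
      refine ⟨?_, h2⟩
      rw [hD2, Finset.mem_image]
      refine ⟨i + 1, by rw [Finset.mem_Icc]; omega, rfl⟩
    · simp only [hf, if_neg h1]
      refine ⟨?_, h1⟩
      rw [hD2, Finset.mem_image]
      exact ⟨i, by rw [Finset.mem_Icc]; omega, rfl⟩
  -- key property: f i = d forces i ∈ {j, j+1} for the unique j with g j = d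
  have hkey : ∀ i ∈ B, s (i + 2) - s i = f i ∨ s (i + 1 + 2) - s (i + 1) = f i := by
    intro i hi
    by_cases h1 : s (i + 2) - s i ∈ D1
    · right; simp only [hf, if_pos h1]
    · left; simp only [hf, if_neg h1]
  have hfiber : ∀ d ∈ B.image f, (B.filter (fun x => f x = d)).card ≤ 2 := by
    intro d hd'
    rw [Finset.mem_image] at hd'
    obtain ⟨i0, hi0, hfi0⟩ := hd'
    set F := B.filter (fun x => f x = d) with hF
    have hFne : F.Nonempty := ⟨i0, by rw [hF, Finset.mem_filter]; exact ⟨hi0, hfi0⟩⟩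
    set j := F.min' hFne with hj
    have hjF : j ∈ F := F.min'_mem hFne
    have hsub : F ⊆ Finset.Icc j (j + 1) := by
      intro i hiF
      rw [Finset.mem_Icc]
      refine ⟨F.min'_le i hiF, ?_⟩
      rw [hF, Finset.mem_filter] at hiF hjF
      obtain ⟨hiB, hfi⟩ := hiF
      obtain ⟨hjB, hfj⟩ := hjF
      have hji : j ≤ i := by
        have : j ∈ F := F.min'_mem hFne
        exact F.min'_le i (by rw [hF, Finset.mem_filter]; exact ⟨hiB, hfi⟩)
      have hiIcc := hiB; have hjIcc := hjB
      rw [hB, Finset.mem_filter, Finset.mem_Icc] at hiIcc hjIcc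
      obtain ⟨⟨hi1, hi3⟩, _⟩ := hiIcc
      obtain ⟨⟨hj1, hj3⟩, _⟩ := hjIcc
      have hn4 : 4 ≤ n := by omega
      rcases hkey i hiB with hci | hci <;> rcases hkey j hjB with hcj | hcj
      · have := ginj i j (by omega) (by omega) (by omega) (by omega)
          (by rw [hci, hcj, hfi, hfj])
        omega
      · have := ginj i (j + 1) (by omega) (by omega) (by omega) (by omega)
          (by rw [hci, hcj, hfi, hfj])
        omega
      · have := ginj (i + 1) j (by omega) (by omega) (by omega) (by omega)
          (by rw [hci, hcj, hfi, hfj])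
        omega
      · have := ginj (i + 1) (j + 1) (by omega) (by omega) (by omega) (by omega)
          (by rw [hci, hcj, hfi, hfj])
        omega
    calc F.card ≤ (Finset.Icc j (j + 1)).card := Finset.card_le_card hsub
      _ = 2 := by rw [Nat.card_Icc]; omega
  have hBcard : B.card ≤ 2 * m := by
    have h1 : B.card ≤ 2 * (B.image f).card :=
      Finset.card_le_mul_card_image B 2 hfiber
    have h2 : (B.image f).card ≤ m := by
      rw [← hm]
      exact Finset.card_le_card (fun d hd' => by
        rw [Finset.mem_image] at hd'
        obtain ⟨i, hi, rfl⟩ := hd'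
        exact hmaps i hi)
    omega
  omega
end
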